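/- arXiv:1607.05626 — 7 statements merged into one kernel-verified Lean document; each statement's English description precedes it below -/
import Mathlib

section
/- Let X and Y be two strings of length m over an alphabet Σ, and let Q be a nonempty finite set of primes such that the product of the primes in Q is greater than m. Then the Hamming distance between X and Y equals 1 if and only if for every q ∈ Q there is exactly one residue j ∈ {0,…,q−1} such that the q-spaced subsequence of X at residue j differs from the q-spaced subsequence of Y at residue j. -/
/-!
The positions where `X` and `Y` differ are exactly the positions `i` whose residue class
`i mod q` carries a differing `q`-spaced subsequence. A single mismatch therefore hits exactly
one residue class for every `q`. Conversely, two mismatches in the same residue class modulo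
every `q ∈ Q` are congruent modulo `∏ q ∈ Q, q` by the Chinese remainder theorem, hence equal
since both are smaller than `m < ∏ q ∈ Q, q`.
-/

/-- The `q`-spaced subsequence of a list `W` at residue `j`: the sublist of
symbols of `W` at 0-indexed positions congruent to `j` modulo `q`, taken in
increasing order of position. -/
def spaced {α : Type*} (W : List α) (q j : ℕ) : List α :=
  ((W.zipIdx.filter fun p => p.2 % q = j).map Prod.fst)

open Function in
theorem Nat.ModEq.prod_of_pairwise_coprime {ι : Type*} {t : Finset ι} {s : ι → ℕ}
    (hs : (t : Set ι).Pairwise (Nat.Coprime on s)) {a b : ℕ}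
    (h : ∀ i ∈ t, a ≡ b [MOD s i]) : a ≡ b [MOD ∏ i ∈ t, s i] := by
  simp only [Nat.modEq_iff_dvd, Nat.cast_prod] at h ⊢
  exact Finset.prod_dvd_of_coprime
    (fun i hi j hj hij => Nat.isCoprime_iff_coprime.2 (hs hi hj hij)) h

theorem hammingDist_eq_one_iff {ι : Type*} [Fintype ι] {β : ι → Type*}
    [∀ i, DecidableEq (β i)] {x y : ∀ i, β i} : hammingDist x y = 1 ↔ ∃! i, x i ≠ y i :=
  (Fintype.existsUnique_iff_card_one _).symm

section spaced

variable {α : Type*} {m : ℕ}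

theorem spaced_ofFn (X : Fin m → α) (q j : ℕ) :
    spaced (List.ofFn X) q j =
      ((List.finRange m).filter fun i : Fin m => (i : ℕ) % q = j).map X := by
  have hzipIdx :
      (List.finRange m).zipIdx = (List.finRange m).map fun i : Fin m => (i, (i : ℕ)) := by
    apply List.ext_getElem <;> simp [List.getElem_zipIdx]
  rw [spaced, List.ofFn_eq_map, List.zipIdx_map, hzipIdx]
  simp [List.filter_map, Function.comp_def]

theorem spaced_ofFn_ne_iff (X Y : Fin m → α) (q j : ℕ) :
    spaced (List.ofFn X) q j ≠ spaced (List.ofFn Y) q j ↔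
      ∃ i : Fin m, (i : ℕ) % q = j ∧ X i ≠ Y i := by
  simp [spaced_ofFn]

end spaced

section residues

variable {m : ℕ} {P : Fin m → Prop}

theorem existsUnique_mod_of_existsUnique {q : ℕ} (hq : 0 < q) (hP : ∃! i, P i) :
    ∃! j, j < q ∧ ∃ i : Fin m, (i : ℕ) % q = j ∧ P i := by
  obtain ⟨a, ha, huniq⟩ := hP
  refine ⟨a % q, ⟨Nat.mod_lt _ hq, a, rfl, ha⟩, ?_⟩
  rintro j ⟨-, i, rfl, hi⟩
  rw [huniq i hi]

theorem existsUnique_of_forall_existsUnique_mod {Q : Finset ℕ} (hQne : Q.Nonempty)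
    (hQ : (Q : Set ℕ).Pairwise Nat.Coprime) (hm : m < ∏ q ∈ Q, q)
    (h : ∀ q ∈ Q, ∃! j, j < q ∧ ∃ i : Fin m, (i : ℕ) % q = j ∧ P i) :
    ∃! i, P i := by
  obtain ⟨q₀, hq₀⟩ := hQne
  obtain ⟨-, ⟨-, a, -, ha⟩, -⟩ := h q₀ hq₀
  refine ⟨a, ha, fun b hb => Fin.ext ?_⟩
  have hmod : (b : ℕ) ≡ a [MOD ∏ q ∈ Q, q] := by
    refine Nat.ModEq.prod_of_pairwise_coprime (s := id) hQ fun q hq => ?_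
    obtain ⟨j, ⟨hjq, -⟩, huniq⟩ := h q hq
    have hres : ∀ i : Fin m, P i → (i : ℕ) % q = j := fun i hi =>
      huniq _ ⟨Nat.mod_lt _ (Nat.zero_lt_of_lt hjq), i, rfl, hi⟩
    exact (hres b hb).trans (hres a ha).symm
  exact hmod.eq_of_lt_of_lt (b.2.trans hm) (a.2.trans hm)

end residues

theorem one_mismatch_iff_unique_residue_per_prime
    {A : Type*} [DecidableEq A] (m : ℕ) (X Y : Fin m → A)
    (Q : Finset ℕ) (hQne : Q.Nonempty) (hQprime : ∀ q ∈ Q, q.Prime)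
    (hprod : m < ∏ q ∈ Q, q) :
    hammingDist X Y = 1 ↔
      ∀ q ∈ Q, ∃! j : ℕ, j < q ∧
        spaced (List.ofFn X) q j ≠ spaced (List.ofFn Y) q j := by
  simp only [hammingDist_eq_one_iff, spaced_ofFn_ne_iff]
  have hQ : (Q : Set ℕ).Pairwise Nat.Coprime := fun p hp q hq hpq =>
    (Nat.coprime_primes (hQprime p hp) (hQprime q hq)).2 hpq
  exact ⟨fun h q hq => existsUnique_mod_of_existsUnique (hQprime q hq).pos h,
    existsUnique_of_forall_existsUnique_mod hQne hQ hprod⟩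
end

section
/- Let Σ be a finite alphabet, let π_1,…,π_m be probability distributions on Σ, let H ∈ Σ^m be a heavy string (H[i] maximizes π_i over Σ for each i), and let z ≥ 1 be a real number. If S ∈ Σ^m satisfies ∏_{i=1}^m π_i(S[i]) ≥ 1/z, then the number of positions i with S[i] ≠ H[i] is at most log₂ z. -/
/-- For a weighted string `π_1, …, π_m` over a finite alphabet with heavy string
`H` (at each position `H` picks a letter of maximum probability), any string `S`
matching the weighted string with probability at least `1/z` (where `z ≥ 1`)
differs from `H` in at most `log₂ z` positions. -/
theorem mismatches_with_heavy_le_log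
    {A : Type*} [Fintype A] (m : ℕ) (π : Fin m → A → ℝ) (z : ℝ)
    (H S : Fin m → A)
    (hnonneg : ∀ i a, 0 ≤ π i a) (hsum : ∀ i, ∑ a, π i a = 1)
    (hheavy : ∀ i a, π i a ≤ π i (H i))
    (hz : 1 ≤ z)
    (hS : 1 / z ≤ ∏ i, π i (S i)) :
    (Nat.card {i : Fin m // S i ≠ H i} : ℝ) ≤ Real.logb 2 z := by
  classical
  set T : Finset (Fin m) := Finset.univ.filter (fun i => S i ≠ H i) with hT
  set k : ℕ := T.card with hk
  have hcard : Nat.card {i : Fin m // S i ≠ H i} = k := by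
    rw [Nat.card_eq_fintype_card, hk, hT]
    simp [Fintype.card_subtype]
  -- at mismatch positions the probability is at most 1/2
  have hhalf : ∀ i ∈ T, π i (S i) ≤ 1 / 2 := by
    intro i hi
    have hne : S i ≠ H i := by simpa [hT] using hi
    have hpair : π i (S i) + π i (H i) ≤ 1 := by
      have : ∑ a ∈ ({S i, H i} : Finset A), π i a ≤ ∑ a, π i a := by
        apply Finset.sum_le_sum_of_subset_of_nonneg (Finset.subset_univ _)
        intro a _ _; exact hnonneg i a
      rwa [Finset.sum_pair hne, hsum i] at this
    have := hheavy i (S i)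
    linarith
  have hprod : ∏ i, π i (S i) ≤ (1 / 2 : ℝ) ^ k := by
    calc ∏ i, π i (S i) ≤ ∏ i, (if i ∈ T then (1/2 : ℝ) else 1) := by
          apply Finset.prod_le_prod
          · intro i _; exact hnonneg i (S i)
          · intro i _
            by_cases h : i ∈ T
            · simpa [h] using hhalf i h
            · simp only [h, if_false]
              calc π i (S i) ≤ π i (H i) := hheavy i (S i)
                _ ≤ ∑ a, π i a := Finset.single_le_sum (fun a _ => hnonneg i a)
                    (Finset.mem_univ _)
                _ = 1 := hsum i
      _ = (1 / 2 : ℝ) ^ k := by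
          rw [Finset.prod_ite_mem, Finset.univ_inter, Finset.prod_const]
  -- conclude
  have h2k : (2 : ℝ) ^ k ≤ z := by
    have hzpos : (0:ℝ) < z := lt_of_lt_of_le one_pos hz
    have h1 : 1 / z ≤ (1/2 : ℝ) ^ k := le_trans hS hprod
    have h2 : (1/2 : ℝ) ^ k = 1 / 2 ^ k := by
      rw [div_pow, one_pow]
    rw [h2, div_le_div_iff₀ hzpos (by positivity)] at h1
    linarith
  rw [hcard]
  calc (k : ℝ) = Real.logb 2 ((2:ℝ) ^ k) := by
        rw [Real.logb_pow, Real.logb_self_eq_one (by norm_num)]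
        ring
    _ ≤ Real.logb 2 z :=
        Real.logb_le_logb_of_le (by norm_num) (by positivity) h2k
end

section
/- Let Σ be a finite alphabet, let π_1,…,π_m be probability distributions on Σ, let H ∈ Σ^m be a heavy string (H[i] maximizes π_i over Σ for each i), and let z > 0 be a real number. Define M as the set of pairs (i, a) with 1 ≤ i ≤ m and a ∈ Σ, a ≠ H[i], such that there exists a string S ∈ Σ^m with S[i] = a and ∏_{j=1}^m π_j(S[j]) ≥ 1/z. Then |M| ≤ z. -/
set_option maxHeartbeats 1000000


/-- For a weighted string `π_1, …, π_m` over a finite alphabet with heavy string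
`H`, the set `M` of pairs `(i, a)` with `a ≠ H[i]` such that some string `S`
with `S[i] = a` matches the weighted string with probability at least `1/z`
has size at most `z`. -/
theorem card_mismatch_pairs_le
    {A : Type*} [Fintype A] (m : ℕ) (π : Fin m → A → ℝ) (z : ℝ)
    (H : Fin m → A)
    (hnonneg : ∀ i a, 0 ≤ π i a) (hsum : ∀ i, ∑ a, π i a = 1)
    (hheavy : ∀ i a, π i a ≤ π i (H i))
    (hz : 0 < z) :
    (Nat.card {p : Fin m × A //
        p.2 ≠ H p.1 ∧ ∃ S : Fin m → A, S p.1 = p.2 ∧ 1 / z ≤ ∏ j, π j (S j)} : ℝ)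
      ≤ z := by
  classical
  set P : Fin m × A → Prop := fun p =>
    p.2 ≠ H p.1 ∧ ∃ S : Fin m → A, S p.1 = p.2 ∧ 1 / z ≤ ∏ j, π j (S j) with hP
  have hcard : Nat.card {p : Fin m × A // P p} = (Finset.univ.filter P).card := by
    simp [Nat.card_eq_fintype_card, Fintype.card_subtype]
  rw [show {p : Fin m × A //
        p.2 ≠ H p.1 ∧ ∃ S : Fin m → A, S p.1 = p.2 ∧ 1 / z ≤ ∏ j, π j (S j)}
      = {p : Fin m × A // P p} from rfl, hcard]
  set F := Finset.univ.filter P with hF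
  set g : Fin m × A → (Fin m → A) := fun p => Function.update H p.1 p.2 with hg
  have hmem : ∀ p ∈ F, P p := fun p hp => (Finset.mem_filter.mp hp).2
  have hginj : ∀ p ∈ F, ∀ q ∈ F, g p = g q → p = q := by
    intro p hp q hq hpq
    by_cases h : p.1 = q.1
    · have e1 : g p p.1 = p.2 := Function.update_self _ _ _
      have e2 : g q q.1 = q.2 := Function.update_self _ _ _
      have : p.2 = q.2 := by rw [← e1, hpq, h, e2]
      exact Prod.ext h this
    · exfalso
      have h1 : g p p.1 = p.2 := by simp [hg]
      have h2 : g q p.1 = H p.1 := by simp [hg, Function.update_of_ne h]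
      exact (hmem p hp).1 (by rw [← h1, hpq, h2])
  have hprod : ∀ p ∈ F, 1 / z ≤ ∏ j, π j (g p j) := by
    intro p hp
    obtain ⟨-, S, hS, hSz⟩ := hmem p hp
    refine hSz.trans (Finset.prod_le_prod (fun j _ => hnonneg j _) ?_)
    intro j _
    by_cases h : j = p.1
    · subst h; simp [hg, hS]
    · rw [hg]; simp only [Function.update_of_ne h]
      exact hheavy j _
  have hsum1 : ∑ S : Fin m → A, ∏ j, π j (S j) = 1 := by
    have h := Finset.prod_univ_sum (fun _ : Fin m => (Finset.univ : Finset A))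
      (fun j a => π j a)
    rw [Fintype.piFinset_univ] at h
    rw [← h]
    simp [hsum]
  have key : (F.card : ℝ) * (1 / z) ≤ 1 := by
    calc (F.card : ℝ) * (1 / z) = ∑ _p ∈ F, 1 / z := by
          rw [Finset.sum_const, nsmul_eq_mul]
      _ ≤ ∑ p ∈ F, ∏ j, π j (g p j) := Finset.sum_le_sum hprod
      _ = ∑ S ∈ F.image g, ∏ j, π j (S j) := (Finset.sum_image (f := fun S => ∏ j, π j (S j)) hginj).symm
      _ ≤ ∑ S : Fin m → A, ∏ j, π j (S j) :=
          Finset.sum_le_sum_of_subset_of_nonneg (Finset.subset_univ _)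
            (fun S _ _ => Finset.prod_nonneg fun j _ => hnonneg j _)
      _ = 1 := hsum1
  rw [mul_one_div, div_le_one hz] at key
  exact key
end

section
/- Let ε ∈ (0,1) and z ≥ 1 be real numbers, and let p_1,…,p_k be real numbers in [0,1] such that p_j · p_{j+1} ≤ 1 − ε for every 1 ≤ j < k. If ∏_{j=1}^k p_j ≥ (1−ε)/z, then k ≤ 2·log_{1/(1−ε)}(z/(1−ε)) + 1. -/
lemma prod_pair_bound (c : ℝ) (hc : 0 ≤ c) (k : ℕ) (p : ℕ → ℝ)
    (hrange : ∀ j, 1 ≤ j → j ≤ k → 0 ≤ p j ∧ p j ≤ 1)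
    (hpairs : ∀ j, 1 ≤ j → j < k → p j * p (j + 1) ≤ c) :
    ∏ j ∈ Finset.Icc 1 k, p j ≤ c ^ (k / 2) := by
  induction k using Nat.strong_induction_on with
  | _ k ih =>
    match k with
    | 0 => simp
    | 1 =>
      simpa using (hrange 1 le_rfl le_rfl).2
    | (m + 2) =>
      have h1 : ∏ j ∈ Finset.Icc 1 (m + 2), p j
          = (∏ j ∈ Finset.Icc 1 m, p j) * (p (m + 1) * p (m + 2)) := by
        rw [Finset.prod_Icc_succ_top (by omega), Finset.prod_Icc_succ_top (by omega)]
        ring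
      have hP : ∏ j ∈ Finset.Icc 1 m, p j ≤ c ^ (m / 2) := by
        apply ih m (by omega)
        · intro j hj1 hj2; exact hrange j hj1 (by omega)
        · intro j hj1 hj2; exact hpairs j hj1 (by omega)
      have hPnn : 0 ≤ ∏ j ∈ Finset.Icc 1 m, p j := by
        apply Finset.prod_nonneg
        intro j hj
        simp only [Finset.mem_Icc] at hj
        exact (hrange j hj.1 (by omega)).1
      have hpair : p (m + 1) * p (m + 2) ≤ c := hpairs (m + 1) (by omega) (by omega)
      have hpairnn : 0 ≤ p (m + 1) * p (m + 2) :=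
        mul_nonneg (hrange (m + 1) (by omega) (by omega)).1
          (hrange (m + 2) (by omega) (by omega)).1
      have : (m + 2) / 2 = m / 2 + 1 := by omega
      rw [h1, this, pow_succ]
      exact mul_le_mul hP hpair hpairnn (pow_nonneg hc _)

/-- Sliding window product counting claim: if `p_1, …, p_k ∈ [0,1]` are such that
the product of each two consecutive numbers is at most `1 − ε`, and the total
product is at least `(1 − ε)/z`, then `k ≤ 2·log_{1/(1−ε)}(z/(1−ε)) + 1`. -/
theorem interval_count_bound
    (ε z : ℝ) (hε0 : 0 < ε) (hε1 : ε < 1) (hz : 1 ≤ z)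
    (k : ℕ) (p : ℕ → ℝ)
    (hrange : ∀ j, 1 ≤ j → j ≤ k → 0 ≤ p j ∧ p j ≤ 1)
    (hpairs : ∀ j, 1 ≤ j → j < k → p j * p (j + 1) ≤ 1 - ε)
    (hprod : (1 - ε) / z ≤ ∏ j ∈ Finset.Icc 1 k, p j) :
    (k : ℝ) ≤ 2 * Real.logb (1 / (1 - ε)) (z / (1 - ε)) + 1 := by
  have h1ε : 0 < 1 - ε := by linarith
  have hz0 : 0 < z := by linarith
  set n := k / 2 with hn
  have hbound : (1 - ε) / z ≤ (1 - ε) ^ n :=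
    hprod.trans (prod_pair_bound (1 - ε) h1ε.le k p hrange hpairs)
  have hb : 1 < 1 / (1 - ε) := by
    rw [lt_div_iff₀ h1ε]; linarith
  have hpow : (1 / (1 - ε)) ^ n ≤ z / (1 - ε) := by
    rw [div_pow, one_pow, div_le_div_iff₀ (pow_pos h1ε n) h1ε]
    have := (div_le_iff₀ hz0).mp hbound
    nlinarith [pow_pos h1ε n]
  have hlog : (n : ℝ) ≤ Real.logb (1 / (1 - ε)) (z / (1 - ε)) := by
    rw [Real.le_logb_iff_rpow_le hb (by positivity)]
    rw [Real.rpow_natCast]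
    exact hpow
  have hk : (k : ℝ) ≤ 2 * (n : ℝ) + 1 := by
    have : k ≤ 2 * n + 1 := by omega
    exact_mod_cast this
  linarith
end

section
/- Let x_1,…,x_n be real numbers in [0,1], let z ≥ 1 be a real number, let M ⊆ {1,…,n} be a set of positions with x_i ≤ 1/2 for every i ∈ M, and let r ∈ {0,1,…,n} be such that for every i ∈ M with i > r one has ∏_{j=i+1}^{n} x_j > 1/(2z). Then the number of positions i ∈ M with i > r is less than log₂ z + 2. -/
/-- If `x_1, …, x_n ∈ [0,1]`, `M` is a set of positions with `x_i ≤ 1/2` for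
`i ∈ M`, and `r` is such that every `i ∈ M` with `i > r` has tail product
`∏_{j=i+1}^{n} x_j > 1/(2z)`, then fewer than `log₂ z + 2` positions of `M`
lie to the right of `r`. -/
theorem mismatch_positions_right_of_r_lt
    (n : ℕ) (x : ℕ → ℝ) (z : ℝ) (hz : 1 ≤ z)
    (hx : ∀ i, 1 ≤ i → i ≤ n → 0 ≤ x i ∧ x i ≤ 1)
    (M : Finset ℕ) (hM : M ⊆ Finset.Icc 1 n)
    (hhalf : ∀ i ∈ M, x i ≤ 1 / 2)
    (r : ℕ) (hr : r ≤ n)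
    (htail : ∀ i ∈ M, r < i → 1 / (2 * z) < ∏ j ∈ Finset.Icc (i + 1) n, x j) :
    ((M.filter fun i => r < i).card : ℝ) < Real.logb 2 z + 2 := by
  have hz0 : (0:ℝ) < z := lt_of_lt_of_le one_pos hz
  have hlogb0 : 0 ≤ Real.logb 2 z := Real.logb_nonneg one_lt_two hz
  set S := M.filter fun i => r < i with hS
  by_cases h0 : S.Nonempty
  · set i₀ := S.min' h0 with hi₀def
    have hi₀S : i₀ ∈ S := S.min'_mem h0
    have hi₀M : i₀ ∈ M := (Finset.mem_filter.mp hi₀S).1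
    have hi₀r : r < i₀ := (Finset.mem_filter.mp hi₀S).2
    -- elements of S other than i₀ lie in Icc (i₀+1) n
    have hinter : Finset.Icc (i₀ + 1) n ∩ S = S.erase i₀ := by
      ext j
      simp only [Finset.mem_inter, Finset.mem_Icc, Finset.mem_erase]
      constructor
      · rintro ⟨⟨h1, h2⟩, hjS⟩
        exact ⟨by omega, hjS⟩
      · rintro ⟨hne, hjS⟩
        have hmin : i₀ ≤ j := S.min'_le j hjS
        have hjM : j ∈ M := (Finset.mem_filter.mp hjS).1
        have := Finset.mem_Icc.mp (hM hjM)
        exact ⟨⟨by omega, this.2⟩, hjS⟩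
    have hk1 : (S.erase i₀).card = S.card - 1 := Finset.card_erase_of_mem hi₀S
    have hk_pos : 1 ≤ S.card := Finset.card_pos.mpr h0
    -- bound the tail product
    have hprod : ∏ j ∈ Finset.Icc (i₀ + 1) n, x j ≤ (1/2 : ℝ) ^ (S.card - 1) := by
      have hle : ∏ j ∈ Finset.Icc (i₀ + 1) n, x j
          ≤ ∏ j ∈ Finset.Icc (i₀ + 1) n, (if j ∈ S then (1/2 : ℝ) else 1) := by
        apply Finset.prod_le_prod
        · intro j hj
          have hj' := Finset.mem_Icc.mp hj
          exact (hx j (by omega) hj'.2).1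
        · intro j hj
          have hj' := Finset.mem_Icc.mp hj
          by_cases hjS : j ∈ S
          · simpa [hjS] using hhalf j (Finset.mem_filter.mp hjS).1
          · simpa [hjS] using (hx j (by omega) hj'.2).2
      calc ∏ j ∈ Finset.Icc (i₀ + 1) n, x j
          ≤ ∏ j ∈ Finset.Icc (i₀ + 1) n, (if j ∈ S then (1/2 : ℝ) else 1) := hle
        _ = ∏ j ∈ Finset.Icc (i₀ + 1) n ∩ S, (1/2 : ℝ) := by
            exact Finset.prod_ite_mem _ _ _
        _ = (1/2 : ℝ) ^ (S.card - 1) := by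
            rw [Finset.prod_const, hinter, hk1]
    have htail' : 1 / (2 * z) < (1/2 : ℝ) ^ (S.card - 1) :=
      lt_of_lt_of_le (htail i₀ hi₀M hi₀r) hprod
    -- turn into a bound on S.card
    have h2 : (2:ℝ) ^ (S.card - 1) < 2 * z := by
      have hp : (0:ℝ) < (2:ℝ) ^ (S.card - 1) := by positivity
      rw [div_lt_iff₀ (by positivity), one_div, inv_pow, ← one_div,
        div_mul_eq_mul_div, lt_div_iff₀ hp] at htail'
      nlinarith
    have hzgt : (2:ℝ) ^ (S.card - 1) / 2 < z := by linarith
    have hlog : ((S.card - 1 : ℕ) : ℝ) - 1 < Real.logb 2 z := by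
      have h1 : Real.logb 2 ((2:ℝ) ^ (S.card - 1) / 2) < Real.logb 2 z :=
        Real.logb_lt_logb one_lt_two (by positivity) hzgt
      have h2' : Real.logb 2 ((2:ℝ) ^ (S.card - 1) / 2)
          = ((S.card - 1 : ℕ) : ℝ) - 1 := by
        rw [Real.logb_div (by positivity) two_ne_zero]
        simp [Real.logb_pow]
      linarith [h2' ▸ h1]
    have hcast : ((S.card - 1 : ℕ) : ℝ) = (S.card : ℝ) - 1 := by
      have := Nat.cast_sub hk_pos (R := ℝ)
      simpa using this
    rw [hcast] at hlog
    linarith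
  · rw [Finset.not_nonempty_iff_eq_empty] at h0
    rw [h0]
    simp
    linarith
end

section
/- Let Σ be a finite alphabet, let π_1,…,π_q be probability distributions on Σ (a weighted text T of length q), and let z ≥ 1 be a real number. Then the number of maximal matching suffixes of T[1,q] with respect to the threshold 1/(2z) is at most 2z. -/
/-- The probability that a string `S` (of length `ℓ ≤ q`) matches the last `ℓ`
positions `T[q−ℓ+1, q]` of a weighted text `T` given by distributions
`π_1, …, π_q`: the product `∏_{i=1}^{ℓ} π_{q−ℓ+i}(S[i])`. -/
def matchProb {A : Type*} (π : ℕ → A → ℝ) (q : ℕ) (S : List A) : ℝ :=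
  ∏ i : Fin S.length, π (q - S.length + i.1 + 1) (S.get i)

/-- `S` is a maximal matching suffix of `T[1,q]` with respect to the threshold
`1/(2z)`: `S` matches `T[q−|S|+1, q]` with probability at least `1/(2z)`, and
either `|S| = q` or every one-letter extension `aS` matches `T[q−|S|, q]` with
probability less than `1/(2z)`. -/
def IsMaxMatchingSuffix {A : Type*} (π : ℕ → A → ℝ) (q : ℕ) (z : ℝ)
    (S : List A) : Prop :=
  S.length ≤ q ∧ 1 / (2 * z) ≤ matchProb π q S ∧
    (S.length = q ∨ ∀ a : A, matchProb π q (a :: S) < 1 / (2 * z))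

/-!
The maximal matching suffixes form an antichain for the suffix order: if `S` were a proper
suffix of another one `S'`, some `aS` would be a suffix of `S'`, and the probability of a
string only drops when it is extended to the left, so `aS` would reach the threshold too.
Now spread the mass of each `S` over the full-length texts ending in `S`: these sets are
disjoint for an antichain, so the probabilities of the maximal matching suffixes sum to at
most `1` (a Kraft-type inequality), and each of them is at least `1/(2z)`.
-/

section MatchProb

variable {A : Type*} (π : ℕ → A → ℝ) {q : ℕ}

lemma matchProb_nonneg (hnonneg : ∀ i, 1 ≤ i → i ≤ q → ∀ a, 0 ≤ π i a) {S : List A}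
    (hS : S.length ≤ q) : 0 ≤ matchProb π q S :=
  Finset.prod_nonneg fun i _ => hnonneg _ (by omega) (by omega) _

lemma matchProb_le_one [Fintype A] (hnonneg : ∀ i, 1 ≤ i → i ≤ q → ∀ a, 0 ≤ π i a)
    (hsum : ∀ i, 1 ≤ i → i ≤ q → ∑ a, π i a = 1) {S : List A} (hS : S.length ≤ q) :
    matchProb π q S ≤ 1 := by
  refine Finset.prod_le_one (fun i _ => hnonneg _ (by omega) (by omega) _) fun i _ => ?_
  have h1 : 1 ≤ q - S.length + i.1 + 1 := by omega
  have h2 : q - S.length + i.1 + 1 ≤ q := by omega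
  calc π (q - S.length + i.1 + 1) (S.get i)
      ≤ ∑ a, π (q - S.length + i.1 + 1) a :=
        Finset.single_le_sum (fun a _ => hnonneg _ h1 h2 a) (Finset.mem_univ _)
    _ = 1 := hsum _ h1 h2

lemma matchProb_cons (a : A) {S : List A} (hS : S.length < q) :
    matchProb π q (a :: S) = π (q - S.length) a * matchProb π q S := by
  change ∏ i : Fin (S.length + 1), π (q - (S.length + 1) + i.1 + 1) ((a :: S).get i) = _
  rw [Fin.prod_univ_succ]
  congr 1
  · congr 1
    simp only [Fin.val_zero]
    omega
  · refine Finset.prod_congr rfl fun i _ => ?_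
    simp only [Fin.val_succ]
    congr 1
    omega

lemma matchProb_append {P S : List A} (h : P.length + S.length ≤ q) :
    matchProb π q (P ++ S) = matchProb π (q - S.length) P * matchProb π q S := by
  induction P with
  | nil => simp [matchProb]
  | cons a P ih =>
    simp only [List.length_cons] at h
    rw [List.cons_append, matchProb_cons π a (by simp; omega), ih (by omega),
      matchProb_cons π a (by omega), List.length_append, mul_assoc, Nat.sub_sub,
      Nat.add_comm S.length]

lemma matchProb_ofFn {m : ℕ} (f : Fin m → A) :
    matchProb π m (List.ofFn f) = ∏ i : Fin m, π (i.1 + 1) (f i) := by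
  rw [matchProb, ← Fin.prod_congr' _ (List.length_ofFn (f := f)).symm]
  refine Finset.prod_congr rfl fun i _ => ?_
  simp

lemma sum_matchProb_ofFn [Fintype A] {m : ℕ} (hsum : ∀ i, 1 ≤ i → i ≤ m → ∑ a, π i a = 1) :
    ∑ f : Fin m → A, matchProb π m (List.ofFn f) = 1 := by
  simp only [matchProb_ofFn]
  rw [← Fintype.piFinset_univ, Finset.sum_prod_piFinset]
  exact Finset.prod_eq_one fun i _ => hsum _ (by omega) (by omega)

lemma matchProb_le_of_isSuffix [Fintype A] (hnonneg : ∀ i, 1 ≤ i → i ≤ q → ∀ a, 0 ≤ π i a)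
    (hsum : ∀ i, 1 ≤ i → i ≤ q → ∑ a, π i a = 1) {S S' : List A} (h : S <:+ S')
    (hS' : S'.length ≤ q) : matchProb π q S' ≤ matchProb π q S := by
  obtain ⟨P, rfl⟩ := h
  rw [List.length_append] at hS'
  rw [matchProb_append π hS']
  exact mul_le_of_le_one_left (matchProb_nonneg π hnonneg (by omega))
    (matchProb_le_one π (fun i h₁ h₂ => hnonneg i h₁ (by omega))
      (fun i h₁ h₂ => hsum i h₁ (by omega)) (by omega))

end MatchProb

section Extensions

variable {A : Type*} [Fintype A] [DecidableEq A]

def extensions (q : ℕ) (S : List A) : Finset (List A) :=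
  Finset.univ.image fun f : Fin (q - S.length) → A => List.ofFn f ++ S

lemma mem_extensions {q : ℕ} {S W : List A} (hS : S.length ≤ q) :
    W ∈ extensions q S ↔ W.length = q ∧ S <:+ W := by
  simp only [extensions, Finset.mem_image, Finset.mem_univ, true_and]
  constructor
  · rintro ⟨f, rfl⟩
    exact ⟨by simp; omega, List.suffix_append _ _⟩
  · rintro ⟨hW, P, rfl⟩
    have hP : P.length = q - S.length := by simp at hW; omega
    exact ⟨fun i => P.get (Fin.cast hP.symm i), by rw [← List.ofFn_congr hP, List.ofFn_get]⟩

lemma sum_matchProb_extensions (π : ℕ → A → ℝ) {q : ℕ}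
    (hsum : ∀ i, 1 ≤ i → i ≤ q → ∑ a, π i a = 1) {S : List A} (hS : S.length ≤ q) :
    ∑ W ∈ extensions q S, matchProb π q W = matchProb π q S := by
  rw [extensions, Finset.sum_image fun f _ g _ h => List.ofFn_injective (List.append_cancel_right h)]
  have hsplit (f : Fin (q - S.length) → A) :
      matchProb π q (List.ofFn f ++ S) = matchProb π (q - S.length) (List.ofFn f) * matchProb π q S :=
    matchProb_append π (by simp; omega)
  simp only [hsplit]
  rw [← Finset.sum_mul, sum_matchProb_ofFn π fun i h₁ h₂ => hsum i h₁ (by omega), one_mul]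

end Extensions

lemma sum_matchProb_le_one_of_isAntichain {A : Type*} [Fintype A] (π : ℕ → A → ℝ) {q : ℕ}
    (hnonneg : ∀ i, 1 ≤ i → i ≤ q → ∀ a, 0 ≤ π i a)
    (hsum : ∀ i, 1 ≤ i → i ≤ q → ∑ a, π i a = 1) (M : Finset (List A))
    (hlen : ∀ S ∈ M, S.length ≤ q) (hM : IsAntichain (· <:+ ·) (M : Set (List A))) :
    ∑ S ∈ M, matchProb π q S ≤ 1 := by
  classical
  have hdisj : (M : Set (List A)).PairwiseDisjoint (extensions q) := by
    intro S hS S' hS' hne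
    refine Finset.disjoint_left.2 fun W hW hW' => ?_
    obtain ⟨-, hSW⟩ := (mem_extensions (hlen S hS)).1 hW
    obtain ⟨-, hS'W⟩ := (mem_extensions (hlen S' hS')).1 hW'
    rcases List.suffix_or_suffix_of_suffix hSW hS'W with h | h
    exacts [hM hS hS' hne h, hM hS' hS hne.symm h]
  have hsub : M.biUnion (extensions q) ⊆ extensions q [] := by
    intro W hW
    obtain ⟨S, hS, hW⟩ := Finset.mem_biUnion.1 hW
    rw [mem_extensions (Nat.zero_le q)]
    exact ⟨((mem_extensions (hlen S hS)).1 hW).1, List.nil_suffix⟩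
  calc ∑ S ∈ M, matchProb π q S
      = ∑ S ∈ M, ∑ W ∈ extensions q S, matchProb π q W :=
        Finset.sum_congr rfl fun S hS => (sum_matchProb_extensions π hsum (hlen S hS)).symm
    _ = ∑ W ∈ M.biUnion (extensions q), matchProb π q W := (Finset.sum_biUnion hdisj).symm
    _ ≤ ∑ W ∈ extensions q [], matchProb π q W :=
        Finset.sum_le_sum_of_subset_of_nonneg hsub fun W hW _ =>
          matchProb_nonneg π hnonneg ((mem_extensions (Nat.zero_le q)).1 hW).1.le
    _ = 1 := sum_matchProb_extensions π hsum (Nat.zero_le q)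

lemma isAntichain_isMaxMatchingSuffix {A : Type*} [Fintype A] (π : ℕ → A → ℝ) (q : ℕ) (z : ℝ)
    (hnonneg : ∀ i, 1 ≤ i → i ≤ q → ∀ a, 0 ≤ π i a)
    (hsum : ∀ i, 1 ≤ i → i ≤ q → ∑ a, π i a = 1) :
    IsAntichain (· <:+ ·) {S : List A | IsMaxMatchingSuffix π q z S} := by
  rintro S ⟨-, -, hmax⟩ S' ⟨hlen', hprob', -⟩ hne ⟨P, rfl⟩
  obtain rfl | ⟨P, a, rfl⟩ := P.eq_nil_or_concat
  · exact hne rfl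
  have haS : a :: S <:+ P.concat a ++ S := ⟨P, by simp⟩
  have hS : S.length < q := by simp at hlen'; omega
  rcases hmax with hq | hmax
  · omega
  · exact (hmax a).not_ge (hprob'.trans (matchProb_le_of_isSuffix π hnonneg hsum haS hlen'))

theorem card_maximal_matching_suffixes_le
    {A : Type*} [Fintype A] (q : ℕ) (π : ℕ → A → ℝ) (z : ℝ)
    (hnonneg : ∀ i, 1 ≤ i → i ≤ q → ∀ a, 0 ≤ π i a)
    (hsum : ∀ i, 1 ≤ i → i ≤ q → ∑ a, π i a = 1)
    (hz : 1 ≤ z) :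
    {S : List A | IsMaxMatchingSuffix π q z S}.Finite ∧
      ({S : List A | IsMaxMatchingSuffix π q z S}.ncard : ℝ) ≤ 2 * z := by
  have hfin : {S : List A | IsMaxMatchingSuffix π q z S}.Finite :=
    (List.finite_length_le A q).subset fun S hS => hS.1
  refine ⟨hfin, ?_⟩
  have hmass_le_one : ∑ S ∈ hfin.toFinset, matchProb π q S ≤ 1 :=
    sum_matchProb_le_one_of_isAntichain π hnonneg hsum hfin.toFinset
      (fun S hS => (hfin.mem_toFinset.1 hS).1)
      (by simpa using isAntichain_isMaxMatchingSuffix π q z hnonneg hsum)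
  have hmass_ge : hfin.toFinset.card • (1 / (2 * z)) ≤ ∑ S ∈ hfin.toFinset, matchProb π q S :=
    Finset.card_nsmul_le_sum _ _ _ fun S hS => (hfin.mem_toFinset.1 hS).2.1
  rw [nsmul_eq_mul, mul_one_div, div_le_iff₀ (by linarith)] at hmass_ge
  rw [Set.ncard_eq_toFinset_card _ hfin]
  exact hmass_ge.trans (mul_le_of_le_one_left (by linarith) hmass_le_one)
end

section
/- Let Σ be a finite alphabet, let π_1,…,π_q be probability distributions on Σ (a weighted text T of length q), let z ≥ 1 be a real number, and let P ∈ Σ^m be a string with m ≤ q. If P matches T[q−m+1,q] with probability at least 1/z, then there exists a maximal matching suffix S of T[1,q] with respect to the threshold 1/(2z) such that |S| ≥ m and the last m symbols of S equal P; moreover, the match probability of P against T[q−m+1,q] equals the match probability of the m-length suffix of S against T[q−m+1,q]. -/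
private lemma aux_extend {A : Type*} (π : ℕ → A → ℝ) (q : ℕ) (z : ℝ) :
    ∀ n (S : List A), S.length ≤ q → q - S.length ≤ n →
      1 / (2 * z) ≤ matchProb π q S →
      ∃ S' : List A, IsMaxMatchingSuffix π q z S' ∧ S <:+ S' := by
  intro n
  induction n with
  | zero =>
    intro S hle hn hp
    exact ⟨S, ⟨hle, hp, Or.inl (by omega)⟩, List.suffix_refl S⟩
  | succ n ih =>
    intro S hle hn hp
    by_cases hq : S.length = q
    · exact ⟨S, ⟨hle, hp, Or.inl hq⟩, List.suffix_refl S⟩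
    by_cases hall : ∀ a, matchProb π q (a :: S) < 1 / (2 * z)
    · exact ⟨S, ⟨hle, hp, Or.inr hall⟩, List.suffix_refl S⟩
    push_neg at hall
    obtain ⟨a, ha⟩ := hall
    obtain ⟨S', hS', hsuf⟩ := ih (a :: S) (by simp; omega) (by simp; omega) ha
    exact ⟨S', hS', (List.suffix_cons a S).trans hsuf⟩

theorem exists_maximal_matching_suffix_ending_with_pattern
    {A : Type*} [Fintype A] (q m : ℕ) (π : ℕ → A → ℝ) (z : ℝ)
    (hnonneg : ∀ i, 1 ≤ i → i ≤ q → ∀ a, 0 ≤ π i a)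
    (hsum : ∀ i, 1 ≤ i → i ≤ q → ∑ a, π i a = 1)
    (hz : 1 ≤ z)
    (P : List A) (hP : P.length = m) (hmq : m ≤ q)
    (hmatch : 1 / z ≤ matchProb π q P) :
    ∃ S : List A, IsMaxMatchingSuffix π q z S ∧ m ≤ S.length ∧
      S.drop (S.length - m) = P ∧
      matchProb π q (S.drop (S.length - m)) = matchProb π q P := by
  have hz0 : (0 : ℝ) < z := by linarith
  have hthresh : 1 / (2 * z) ≤ matchProb π q P := by
    have : 1 / (2 * z) ≤ 1 / z := by
      apply one_div_le_one_div_of_le hz0; linarith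
    linarith
  obtain ⟨S, hS, hsuf⟩ :=
    aux_extend π q z (q - P.length) P (by omega) le_rfl hthresh
  obtain ⟨L, rfl⟩ := hsuf
  have hlen : m ≤ (L ++ P).length := by simp [hP]
  have hdrop : (L ++ P).drop ((L ++ P).length - m) = P := by
    have : (L ++ P).length - m = L.length := by simp [hP]
    rw [this, List.drop_left]
  exact ⟨L ++ P, hS, hlen, hdrop, by rw [hdrop]⟩
end
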